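/- arXiv:1604.06263 — 3 statements merged into one kernel-verified Lean document; each statement's English description precedes it below -/
import Mathlib

section
/- Fix d > 0 and c ∈ ℝ, and let σ be the measure on ℝ with Lebesgue density (1/2)·√(d/π)·e^{-d(log|u|)²}/|u|^c for u ≠ 0. Then σ has finite moments of all integer orders, and for all k ∈ ℤ: the even moments satisfy ∫_{-∞}^{∞} u^{2k} dσ(u) = e^{(2k+1-c)²/(4d)} and the odd moments satisfy ∫_{-∞}^{∞} u^{2k+1} dσ(u) = 0. -/
/-!
The substitution `u = exp x` turns `∫_{u > 0} exp (-d (log u)²) u ^ s du` into the shifted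
Gaussian integral `∫ exp (-d x² + (s + 1) x) dx = √(π / d) exp ((s + 1)² / (4 d))`. The density
of `σ` depends only on `|u|`, so its absolute moments are twice these half-line integrals, the
even moments coincide with them, and the odd moments vanish by symmetry.
-/

open MeasureTheory Real Set

section

variable {E : Type*} [NormedAddCommGroup E]

theorem integrable_comp_abs_of_integrableOn_Ioi {f : ℝ → E} (hf : IntegrableOn f (Ioi 0)) :
    Integrable fun x => f |x| := by
  have hIoi : IntegrableOn (fun x => f |x|) (Ioi 0) :=
    hf.congr_fun (fun x hx => by rw [abs_of_pos (mem_Ioi.1 hx)]) measurableSet_Ioi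
  have hIic : IntegrableOn (fun x => f |x|) (Iic 0) := by
    rw [← Measure.map_neg_eq_self (volume : Measure ℝ),
      measurableEmbedding_neg.integrableOn_map_iff]
    simp_rw [Function.comp_def, abs_neg, neg_preimage, neg_Iic, neg_zero]
    exact (integrableOn_Ici_iff_integrableOn_Ioi).mpr hIoi
  simpa [← integrableOn_univ] using hIic.union hIoi

variable [NormedSpace ℝ E]

theorem integral_eq_zero_of_odd {G : Type*} [MeasurableSpace G] [AddGroup G] [MeasurableNeg G]
    {μ : Measure G} [μ.IsNegInvariant] {f : G → E} (hf : Function.Odd f) :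
    ∫ x, f x ∂μ = 0 := by
  have h := integral_neg_eq_self f μ
  simp_rw [show ∀ x, f (-x) = -f x from hf, integral_neg] at h
  rw [neg_eq_iff_add_eq_zero, ← two_smul ℝ, smul_eq_zero] at h
  exact h.resolve_left two_ne_zero

theorem integrableOn_Ioi_zero_iff_integrable_comp_exp (g : ℝ → E) :
    IntegrableOn g (Ioi 0) ↔ Integrable fun x => exp x • g (exp x) := by
  rw [← range_exp, ← image_univ,
    integrableOn_image_iff_integrableOn_abs_deriv_smul MeasurableSet.univ
      (fun x _ => (hasDerivAt_exp x).hasDerivWithinAt) exp_injective.injOn, integrableOn_univ]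
  simp_rw [abs_of_pos (exp_pos _)]

theorem integral_Ioi_zero_eq_integral_comp_exp (g : ℝ → E) :
    ∫ y in Ioi 0, g y = ∫ x, exp x • g (exp x) := by
  rw [← range_exp, ← image_univ, integral_image_eq_integral_abs_deriv_smul MeasurableSet.univ
    (fun x _ => (hasDerivAt_exp x).hasDerivWithinAt) exp_injective.injOn, Measure.restrict_univ]
  simp_rw [abs_of_pos (exp_pos _)]

theorem integrable_withDensity_ofReal_iff {α : Type*} [MeasurableSpace α] {μ : Measure α}
    {ρ : α → ℝ} (hρ : Measurable ρ) (hρ₀ : ∀ x, 0 ≤ ρ x) {g : α → E} :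
    Integrable g (μ.withDensity fun x => ENNReal.ofReal (ρ x)) ↔
      Integrable (fun x => ρ x • g x) μ := by
  rw [integrable_withDensity_iff_integrable_smul' hρ.ennreal_ofReal
    (ae_of_all _ fun _ => ENNReal.ofReal_lt_top)]
  simp_rw [ENNReal.toReal_ofReal (hρ₀ _)]

theorem integral_withDensity_ofReal {α : Type*} [MeasurableSpace α] {μ : Measure α}
    {ρ : α → ℝ} (hρ : Measurable ρ) (hρ₀ : ∀ x, 0 ≤ ρ x) (g : α → E) :
    ∫ x, g x ∂μ.withDensity (fun x => ENNReal.ofReal (ρ x)) = ∫ x, ρ x • g x ∂μ := by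
  rw [integral_withDensity_eq_integral_toReal_smul hρ.ennreal_ofReal
    (ae_of_all _ fun _ => ENNReal.ofReal_lt_top)]
  simp_rw [ENNReal.toReal_ofReal (hρ₀ _)]

end

theorem exp_neg_mul_sq_add_mul_eq_exp_neg_mul_sub_sq_mul {d : ℝ} (hd : d ≠ 0) (a x : ℝ) :
    exp (-d * x ^ 2 + a * x) = exp (-d * (x - a / (2 * d)) ^ 2) * exp (a ^ 2 / (4 * d)) := by
  rw [← exp_add]
  congr 1
  field_simp
  ring

theorem integrable_exp_neg_mul_sq_add_mul {d : ℝ} (hd : 0 < d) (a : ℝ) :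
    Integrable fun x : ℝ => exp (-d * x ^ 2 + a * x) := by
  simpa only [exp_neg_mul_sq_add_mul_eq_exp_neg_mul_sub_sq_mul hd.ne'] using
    ((integrable_exp_neg_mul_sq hd).comp_sub_right (a / (2 * d))).mul_const _

theorem integral_exp_neg_mul_sq_add_mul {d : ℝ} (hd : 0 < d) (a : ℝ) :
    ∫ x : ℝ, exp (-d * x ^ 2 + a * x) = √(π / d) * exp (a ^ 2 / (4 * d)) := by
  simp only [exp_neg_mul_sq_add_mul_eq_exp_neg_mul_sub_sq_mul hd.ne', integral_mul_const,
    integral_sub_right_eq_self (fun x => exp (-d * x ^ 2)), integral_gaussian]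

theorem exp_mul_exp_neg_mul_log_sq_mul_rpow_exp (d s x : ℝ) :
    exp x * (exp (-d * log (exp x) ^ 2) * exp x ^ s) = exp (-d * x ^ 2 + (s + 1) * x) := by
  rw [log_exp, ← exp_mul, ← exp_add, ← exp_add]
  ring_nf

theorem integrableOn_Ioi_exp_neg_mul_log_sq_mul_rpow {d : ℝ} (hd : 0 < d) (s : ℝ) :
    IntegrableOn (fun u => exp (-d * log u ^ 2) * u ^ s) (Ioi 0) := by
  simpa only [integrableOn_Ioi_zero_iff_integrable_comp_exp, smul_eq_mul,
    exp_mul_exp_neg_mul_log_sq_mul_rpow_exp] using integrable_exp_neg_mul_sq_add_mul hd (s + 1)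

theorem integral_Ioi_exp_neg_mul_log_sq_mul_rpow {d : ℝ} (hd : 0 < d) (s : ℝ) :
    ∫ u in Ioi 0, exp (-d * log u ^ 2) * u ^ s = √(π / d) * exp ((s + 1) ^ 2 / (4 * d)) := by
  simp only [integral_Ioi_zero_eq_integral_comp_exp, smul_eq_mul,
    exp_mul_exp_neg_mul_log_sq_mul_rpow_exp, integral_exp_neg_mul_sq_add_mul hd]

theorem integrable_exp_neg_mul_log_abs_sq_mul_abs_rpow {d : ℝ} (hd : 0 < d) (s : ℝ) :
    Integrable fun u => exp (-d * log |u| ^ 2) * |u| ^ s :=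
  integrable_comp_abs_of_integrableOn_Ioi (integrableOn_Ioi_exp_neg_mul_log_sq_mul_rpow hd s)

theorem integral_exp_neg_mul_log_abs_sq_mul_abs_rpow {d : ℝ} (hd : 0 < d) (s : ℝ) :
    ∫ u, exp (-d * log |u| ^ 2) * |u| ^ s = 2 * (√(π / d) * exp ((s + 1) ^ 2 / (4 * d))) := by
  rw [integral_comp_abs (f := fun u => exp (-d * log u ^ 2) * u ^ s),
    integral_Ioi_exp_neg_mul_log_sq_mul_rpow hd]

noncomputable def lognormalDensity (d c u : ℝ) : ℝ :=
  (1 / 2) * √(d / π) * exp (-d * log |u| ^ 2) / |u| ^ c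

theorem measurable_lognormalDensity (d c : ℝ) : Measurable (lognormalDensity d c) := by
  unfold lognormalDensity
  fun_prop

theorem lognormalDensity_nonneg (d c u : ℝ) : 0 ≤ lognormalDensity d c u := by
  unfold lognormalDensity
  have := rpow_nonneg (abs_nonneg u) c
  positivity

theorem lognormalDensity_neg (d c u : ℝ) :
    lognormalDensity d c (-u) = lognormalDensity d c u := by
  simp only [lognormalDensity, abs_neg]

/-- Only almost everywhere: at `u = 0` the two sides differ through the junk values of
`0 ^ n` and `0 ^ c`. -/
theorem lognormalDensity_mul_abs_zpow_ae_eq (d c : ℝ) (n : ℤ) :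
    (fun u => lognormalDensity d c u * |u| ^ n) =ᵐ[volume]
      fun u => (1 / 2 * √(d / π)) * (exp (-d * log |u| ^ 2) * |u| ^ ((n : ℝ) - c)) := by
  filter_upwards [volume.ae_ne 0] with u hu
  rw [lognormalDensity, rpow_sub (abs_pos.2 hu), rpow_intCast]
  field_simp

theorem integrable_lognormalDensity_mul_abs_zpow {d : ℝ} (hd : 0 < d) (c : ℝ) (n : ℤ) :
    Integrable fun u => lognormalDensity d c u * |u| ^ n :=
  ((integrable_exp_neg_mul_log_abs_sq_mul_abs_rpow hd _).const_mul _).congr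
    (lognormalDensity_mul_abs_zpow_ae_eq d c n).symm

theorem integral_lognormalDensity_mul_abs_zpow {d : ℝ} (hd : 0 < d) (c : ℝ) (n : ℤ) :
    ∫ u, lognormalDensity d c u * |u| ^ n = exp (((n : ℝ) + 1 - c) ^ 2 / (4 * d)) := by
  have hsqrt : √(d / π) * √(π / d) = 1 := by
    rw [← sqrt_mul (by positivity), show d / π * (π / d) = 1 by field_simp, sqrt_one]
  rw [integral_congr_ae (lognormalDensity_mul_abs_zpow_ae_eq d c n), integral_const_mul,
    integral_exp_neg_mul_log_abs_sq_mul_abs_rpow hd]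
  calc 1 / 2 * √(d / π) * (2 * (√(π / d) * exp ((↑n - c + 1) ^ 2 / (4 * d))))
      = (√(d / π) * √(π / d)) * exp ((↑n - c + 1) ^ 2 / (4 * d)) := by ring
    _ = exp (((n : ℝ) + 1 - c) ^ 2 / (4 * d)) := by rw [hsqrt, one_mul, sub_add_eq_add_sub]

/-- (Example 1, (ii)) The measure on `ℝ` with Lebesgue density
`(1/2)√(d/π) e^{-d (log|u|)²} / |u|^c` has finite moments of all integer orders; its even
moments are `e^{(2k+1-c)²/(4d)}` and its odd moments vanish. -/
theorem lognormal_hamburger_moments (d c : ℝ) (hd : 0 < d)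
    (σ : Measure ℝ)
    (hσ : σ = volume.withDensity fun u : ℝ =>
      ENNReal.ofReal ((1 / 2) * Real.sqrt (d / π) * Real.exp (-d * Real.log |u| ^ 2) / |u| ^ c)) :
    (∀ n : ℤ, Integrable (fun u : ℝ => |u| ^ n) σ) ∧
    (∀ k : ℤ, ∫ u, u ^ (2 * k) ∂σ = Real.exp ((2 * (k : ℝ) + 1 - c) ^ 2 / (4 * d))) ∧
    (∀ k : ℤ, ∫ u, u ^ (2 * k + 1) ∂σ = 0) := by
  replace hσ : σ = volume.withDensity fun u => ENNReal.ofReal (lognormalDensity d c u) := hσ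
  have hρ := measurable_lognormalDensity d c
  have hρ₀ := lognormalDensity_nonneg d c
  subst hσ
  refine ⟨fun n => ?_, fun k => ?_, fun k => ?_⟩
  · rw [integrable_withDensity_ofReal_iff hρ hρ₀]
    exact integrable_lognormalDensity_mul_abs_zpow hd c n
  · rw [integral_withDensity_ofReal hρ hρ₀]
    have h := integral_lognormalDensity_mul_abs_zpow hd c (2 * k)
    simp only [(even_two_mul k).zpow_abs] at h
    push_cast at h
    exact h
  · rw [integral_withDensity_ofReal hρ hρ₀]
    refine integral_eq_zero_of_odd fun u => ?_
    simp only [lognormalDensity_neg, (odd_two_mul_add_one k).neg_zpow, smul_neg]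
end

section
/- For every d > 0 and c ∈ ℝ, the strong Stieltjes moment problem with moments μ_n = e^{(n+1-c)²/(4d)}, n ∈ ℤ, is indeterminate: there exist two distinct finite Borel measures β₁ and β₂ on (0,∞), each with infinite support, such that ∫_{0}^{∞} u^n dβ_i(u) = e^{(n+1-c)²/(4d)} (up to one common positive normalizing constant) for all n ∈ ℤ and i = 1,2. -/
/-!
In the variable `t = log u` the log-normal measure has density `e^{(1-c)t - d t²}`, so its moments
are the Gaussian integrals `∫ e^{(n+1-c)t - d t²} dt = √(π/d) e^{(n+1-c)²/(4d)}`. Multiplying the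
density by `1 + ½ sin (2πd t + πc)` keeps it positive and does not change any moment: completing the
square in the complex Gaussian integral shifts the frequency `2πd` into the phase, and
`∫ e^{k t - d t²} sin (2πd t + πc) dt` is a multiple of `sin (π (k + c)) = sin ((n + 1) π) = 0`.
The two continuous densities differ, hence so do the measures.
-/

open MeasureTheory Real

section GaussianIntegrals

theorem ofReal_exp_mul_sub_mul_sq (d k t : ℝ) :
    ((exp (k * t - d * t ^ 2) : ℝ) : ℂ) = Complex.exp (-d * t ^ 2 + k * t + 0) := by
  push_cast
  ring_nf

theorem exp_mul_sub_mul_sq_mul_sin_eq_im (d k ω φ t : ℝ) :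
    exp (k * t - d * t ^ 2) * sin (ω * t + φ)
      = (Complex.exp (-d * t ^ 2 + (k + ω * Complex.I) * t + φ * Complex.I)).im := by
  rw [show -d * (t : ℂ) ^ 2 + (k + ω * Complex.I) * t + φ * Complex.I
      = ((k * t - d * t ^ 2 : ℝ) : ℂ) + ((ω * t + φ : ℝ) : ℂ) * Complex.I by push_cast; ring,
    Complex.exp_add, ← Complex.ofReal_exp, Complex.im_ofReal_mul, Complex.exp_ofReal_mul_I_im]

variable {d : ℝ}

theorem integral_cexp_neg_mul_sq_add (hd : 0 < d) (z w : ℂ) :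
    ∫ t : ℝ, Complex.exp (-d * t ^ 2 + z * t + w)
      = √(π / d) * Complex.exp (w + z ^ 2 / (4 * d)) := by
  have hb : (-(d : ℂ)).re < 0 := by simpa using hd
  rw [integral_cexp_quadratic hb, neg_neg, Real.sqrt_eq_rpow,
    Complex.ofReal_cpow (div_pos pi_pos hd).le]
  push_cast
  ring_nf

theorem integrable_exp_mul_sub_mul_sq (hd : 0 < d) (k : ℝ) :
    Integrable fun t : ℝ => exp (k * t - d * t ^ 2) := by
  have h := integrable_cexp_quadratic (b := d) (by simpa using hd) k 0
  simp_rw [← ofReal_exp_mul_sub_mul_sq] at h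
  simpa only [RCLike.re_to_complex, Complex.ofReal_re] using h.re

theorem integral_exp_mul_sub_mul_sq (hd : 0 < d) (k : ℝ) :
    ∫ t : ℝ, exp (k * t - d * t ^ 2) = √(π / d) * exp (k ^ 2 / (4 * d)) := by
  apply Complex.ofReal_injective
  rw [← integral_complex_ofReal]
  simp_rw [ofReal_exp_mul_sub_mul_sq]
  rw [integral_cexp_neg_mul_sq_add hd]
  push_cast
  ring_nf

theorem integrable_exp_mul_sub_mul_sq_mul_sin (hd : 0 < d) (k ω φ : ℝ) :
    Integrable fun t : ℝ => exp (k * t - d * t ^ 2) * sin (ω * t + φ) := by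
  simp_rw [exp_mul_sub_mul_sq_mul_sin_eq_im]
  exact (integrable_cexp_quadratic (b := d) (by simpa using hd) _ _).im

theorem integral_exp_mul_sub_mul_sq_mul_sin (hd : 0 < d) (k ω φ : ℝ) :
    ∫ t : ℝ, exp (k * t - d * t ^ 2) * sin (ω * t + φ)
      = √(π / d) * exp ((k ^ 2 - ω ^ 2) / (4 * d)) * sin (k * ω / (2 * d) + φ) := by
  have h := integral_im (integrable_cexp_quadratic (b := d) (by simpa using hd)
    (k + ω * Complex.I) (φ * Complex.I))
  simp only [RCLike.im_to_complex] at h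
  simp_rw [exp_mul_sub_mul_sq_mul_sin_eq_im]
  rw [h, integral_cexp_neg_mul_sq_add hd,
    show (φ * Complex.I + (k + ω * Complex.I) ^ 2 / (4 * d) : ℂ)
      = (((k ^ 2 - ω ^ 2) / (4 * d) : ℝ) : ℂ) + ((k * ω / (2 * d) + φ : ℝ) : ℂ) * Complex.I by
      push_cast; field_simp; ring_nf; simp only [Complex.I_sq]; ring,
    Complex.exp_add, ← Complex.ofReal_exp, ← mul_assoc, ← Complex.ofReal_mul,
    Complex.im_ofReal_mul, Complex.exp_ofReal_mul_I_im]

end GaussianIntegrals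

theorem Real.measurableEmbedding_exp : MeasurableEmbedding exp :=
  continuous_exp.measurableEmbedding exp_injective

noncomputable def mapExpWithDensity (g : ℝ → ℝ) : Measure ℝ :=
  (volume.withDensity fun t => ENNReal.ofReal (g t)).map exp

theorem mapExpWithDensity_Iic_zero (g : ℝ → ℝ) : mapExpWithDensity g (Set.Iic 0) = 0 := by
  rw [mapExpWithDensity, Measure.map_apply measurable_exp measurableSet_Iic,
    show exp ⁻¹' Set.Iic 0 = ∅ by ext t; simp [exp_pos t]]
  exact measure_empty

section MapExpWithDensity

variable {g : ℝ → ℝ}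

theorem mapExpWithDensity_eq_zero_iff (hg : Measurable g) (hpos : ∀ t, 0 < g t) {s : Set ℝ}
    (hs : MeasurableSet s) : mapExpWithDensity g s = 0 ↔ volume (exp ⁻¹' s) = 0 := by
  rw [mapExpWithDensity, Measure.map_apply measurable_exp hs,
    withDensity_apply_eq_zero' hg.ennreal_ofReal.aemeasurable]
  simp [hpos]

theorem mapExpWithDensity_compl_finset_ne_zero (hg : Measurable g) (hpos : ∀ t, 0 < g t)
    (s : Finset ℝ) : mapExpWithDensity g ((↑s : Set ℝ)ᶜ) ≠ 0 := by
  rw [Ne, mapExpWithDensity_eq_zero_iff hg hpos s.finite_toSet.measurableSet.compl,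
    Set.preimage_compl]
  intro h
  have hnull : volume (exp ⁻¹' ↑s) = 0 :=
    (s.finite_toSet.preimage exp_injective.injOn).measure_zero _
  simpa [hnull, h] using measure_univ_le_add_compl (μ := volume) (exp ⁻¹' (s : Set ℝ))

theorem integrable_mapExpWithDensity_iff (hg : Measurable g) (hg0 : ∀ t, 0 ≤ g t)
    {f : ℝ → ℝ} : Integrable f (mapExpWithDensity g) ↔ Integrable fun t => g t * f (exp t) := by
  rw [mapExpWithDensity, measurableEmbedding_exp.integrable_map_iff,
    integrable_withDensity_iff_integrable_smul' hg.ennreal_ofReal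
      (.of_forall fun _ => ENNReal.ofReal_lt_top)]
  simp [hg0]

theorem integral_mapExpWithDensity (hg : Measurable g) (hg0 : ∀ t, 0 ≤ g t) (f : ℝ → ℝ) :
    ∫ u, f u ∂mapExpWithDensity g = ∫ t, g t * f (exp t) := by
  rw [mapExpWithDensity, measurableEmbedding_exp.integral_map,
    integral_withDensity_eq_integral_toReal_smul hg.ennreal_ofReal
      (.of_forall fun _ => ENNReal.ofReal_lt_top)]
  simp [hg0]

theorem eq_of_mapExpWithDensity_eq {g₁ g₂ : ℝ → ℝ} (hg₁ : Continuous g₁) (hg₂ : Continuous g₂)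
    (hg₁0 : ∀ t, 0 ≤ g₁ t) (hg₂0 : ∀ t, 0 ≤ g₂ t)
    (h : mapExpWithDensity g₁ = mapExpWithDensity g₂) : g₁ = g₂ := by
  have hc₁ : Continuous fun t => ENNReal.ofReal (g₁ t) := ENNReal.continuous_ofReal.comp hg₁
  have hc₂ : Continuous fun t => ENNReal.ofReal (g₂ t) := ENNReal.continuous_ofReal.comp hg₂
  have hdens := measurableEmbedding_exp.map_injective h
  rw [withDensity_eq_iff_of_sigmaFinite hc₁.aemeasurable hc₂.aemeasurable,
    hc₁.ae_eq_iff_eq volume hc₂] at hdens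
  funext t
  exact (ENNReal.ofReal_eq_ofReal_iff (hg₁0 t) (hg₂0 t)).mp (congrFun hdens t)

end MapExpWithDensity

-- The log-normal measure `e^{-d (log u)²} u^{-c} du` in the variable `t = log u`, `du = e^t dt`.
noncomputable def lognormalLogDensity (d c t : ℝ) : ℝ :=
  exp ((1 - c) * t - d * t ^ 2)

noncomputable def perturbedLognormalLogDensity (d c t : ℝ) : ℝ :=
  lognormalLogDensity d c t * (1 + sin (2 * π * d * t + π * c) / 2)

section Lognormal

variable {d c : ℝ}

theorem continuous_lognormalLogDensity : Continuous (lognormalLogDensity d c) := by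
  unfold lognormalLogDensity; fun_prop

theorem continuous_perturbedLognormalLogDensity :
    Continuous (perturbedLognormalLogDensity d c) :=
  continuous_lognormalLogDensity.mul (by fun_prop)

theorem lognormalLogDensity_pos (t : ℝ) : 0 < lognormalLogDensity d c t :=
  exp_pos _

theorem perturbedLognormalLogDensity_pos (t : ℝ) : 0 < perturbedLognormalLogDensity d c t :=
  mul_pos (lognormalLogDensity_pos t) (by linarith [neg_one_le_sin (2 * π * d * t + π * c)])

theorem lognormalLogDensity_mul_exp_zpow (t : ℝ) (n : ℤ) :
    lognormalLogDensity d c t * exp t ^ n = exp ((n + 1 - c) * t - d * t ^ 2) := by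
  rw [lognormalLogDensity, ← rpow_intCast, ← exp_mul, ← exp_add]
  ring_nf

theorem perturbedLognormalLogDensity_mul_exp_zpow (t : ℝ) (n : ℤ) :
    perturbedLognormalLogDensity d c t * exp t ^ n
      = exp ((n + 1 - c) * t - d * t ^ 2)
        + exp ((n + 1 - c) * t - d * t ^ 2) * sin (2 * π * d * t + π * c) / 2 := by
  rw [perturbedLognormalLogDensity, mul_right_comm, lognormalLogDensity_mul_exp_zpow]
  ring

theorem perturbedLognormalLogDensity_ne (hd : 0 < d) :
    perturbedLognormalLogDensity d c ≠ lognormalLogDensity d c := by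
  intro h
  have ht₀ := congrFun h ((1 / 2 - c) / (2 * d))
  rw [perturbedLognormalLogDensity,
    show 2 * π * d * ((1 / 2 - c) / (2 * d)) + π * c = π / 2 by field_simp; ring, sin_pi_div_two]
    at ht₀
  linarith [lognormalLogDensity_pos (d := d) (c := c) ((1 / 2 - c) / (2 * d))]

theorem mapExpWithDensity_lognormal_ne_perturbed (hd : 0 < d) :
    mapExpWithDensity (lognormalLogDensity d c)
      ≠ mapExpWithDensity (perturbedLognormalLogDensity d c) := fun h =>
  perturbedLognormalLogDensity_ne hd <| Eq.symm <|
    eq_of_mapExpWithDensity_eq continuous_lognormalLogDensity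
      continuous_perturbedLognormalLogDensity (fun t => (lognormalLogDensity_pos t).le)
      (fun t => (perturbedLognormalLogDensity_pos t).le) h

theorem integrable_zpow_lognormal (hd : 0 < d) (n : ℤ) :
    Integrable (fun u : ℝ => u ^ n) (mapExpWithDensity (lognormalLogDensity d c)) := by
  rw [integrable_mapExpWithDensity_iff continuous_lognormalLogDensity.measurable
    fun t => (lognormalLogDensity_pos t).le]
  simp_rw [lognormalLogDensity_mul_exp_zpow]
  exact integrable_exp_mul_sub_mul_sq hd _

theorem integral_zpow_lognormal (hd : 0 < d) (n : ℤ) :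
    ∫ u, u ^ n ∂mapExpWithDensity (lognormalLogDensity d c)
      = √(π / d) * exp ((n + 1 - c) ^ 2 / (4 * d)) := by
  rw [integral_mapExpWithDensity continuous_lognormalLogDensity.measurable
    fun t => (lognormalLogDensity_pos t).le]
  simp_rw [lognormalLogDensity_mul_exp_zpow]
  exact integral_exp_mul_sub_mul_sq hd _

theorem integrable_zpow_perturbedLognormal (hd : 0 < d) (n : ℤ) :
    Integrable (fun u : ℝ => u ^ n) (mapExpWithDensity (perturbedLognormalLogDensity d c)) := by
  rw [integrable_mapExpWithDensity_iff continuous_perturbedLognormalLogDensity.measurable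
    fun t => (perturbedLognormalLogDensity_pos t).le]
  simp_rw [perturbedLognormalLogDensity_mul_exp_zpow]
  exact (integrable_exp_mul_sub_mul_sq hd _).add
    ((integrable_exp_mul_sub_mul_sq_mul_sin hd _ _ _).div_const 2)

theorem integral_zpow_perturbedLognormal (hd : 0 < d) (n : ℤ) :
    ∫ u, u ^ n ∂mapExpWithDensity (perturbedLognormalLogDensity d c)
      = √(π / d) * exp ((n + 1 - c) ^ 2 / (4 * d)) := by
  rw [integral_mapExpWithDensity continuous_perturbedLognormalLogDensity.measurable
    fun t => (perturbedLognormalLogDensity_pos t).le]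
  simp_rw [perturbedLognormalLogDensity_mul_exp_zpow]
  rw [integral_add (integrable_exp_mul_sub_mul_sq hd _)
      ((integrable_exp_mul_sub_mul_sq_mul_sin hd _ _ _).div_const 2),
    integral_div, integral_exp_mul_sub_mul_sq hd, integral_exp_mul_sub_mul_sq_mul_sin hd,
    show (n + 1 - c) * (2 * π * d) / (2 * d) + π * c = ((n + 1 : ℤ) : ℝ) * π by
      push_cast; field_simp; ring,
    sin_int_mul_pi]
  ring

end Lognormal

/-- (Example 2, (i)) For every `d > 0` and `c ∈ ℝ`, the strong
Stieltjes moment problem with moments `μₙ = e^{(n+1-c)²/(4d)}`, `n ∈ ℤ`, is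
indeterminate: there are two distinct finite Borel measures on `(0,∞)` with infinite
support realizing these moments (up to one common positive normalizing constant). -/
theorem lognormal_strong_stieltjes_indeterminate (d c : ℝ) (hd : 0 < d) :
    ∃ β₁ β₂ : Measure ℝ, IsFiniteMeasure β₁ ∧ IsFiniteMeasure β₂ ∧
      β₁ (Set.Iic 0) = 0 ∧ β₂ (Set.Iic 0) = 0 ∧
      (∀ s : Finset ℝ, β₁ ((↑s : Set ℝ)ᶜ) ≠ 0) ∧
      (∀ s : Finset ℝ, β₂ ((↑s : Set ℝ)ᶜ) ≠ 0) ∧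
      β₁ ≠ β₂ ∧
      ∃ C : ℝ, 0 < C ∧ ∀ n : ℤ,
        (Integrable (fun u : ℝ => u ^ n) β₁ ∧
          ∫ u, u ^ n ∂β₁ = C * Real.exp (((n : ℝ) + 1 - c) ^ 2 / (4 * d))) ∧
        (Integrable (fun u : ℝ => u ^ n) β₂ ∧
          ∫ u, u ^ n ∂β₂ = C * Real.exp (((n : ℝ) + 1 - c) ^ 2 / (4 * d))) := by
  have hfinite (β : Measure ℝ) (h : Integrable (fun u : ℝ => u ^ (0 : ℤ)) β) : IsFiniteMeasure β :=
    (integrable_const_iff_isFiniteMeasure one_ne_zero).mp (by simpa using h)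
  refine ⟨mapExpWithDensity (lognormalLogDensity d c),
    mapExpWithDensity (perturbedLognormalLogDensity d c),
    hfinite _ (integrable_zpow_lognormal hd 0),
    hfinite _ (integrable_zpow_perturbedLognormal hd 0),
    mapExpWithDensity_Iic_zero _, mapExpWithDensity_Iic_zero _,
    mapExpWithDensity_compl_finset_ne_zero continuous_lognormalLogDensity.measurable
      lognormalLogDensity_pos,
    mapExpWithDensity_compl_finset_ne_zero
      continuous_perturbedLognormalLogDensity.measurable perturbedLognormalLogDensity_pos,
    mapExpWithDensity_lognormal_ne_perturbed hd, √(π / d), by positivity, fun n =>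
    ⟨⟨integrable_zpow_lognormal hd n, integral_zpow_lognormal hd n⟩,
      ⟨integrable_zpow_perturbedLognormal hd n, integral_zpow_perturbedLognormal hd n⟩⟩⟩
end

section
/- Let σ be a finite Borel measure on ℝ with σ({0}) = 0 and finite moments of all integer orders (∫ |u|^n dσ(u) < ∞ for all n ∈ ℤ). Let g be a σ-essentially bounded measurable function on ℝ such that ∫_{-∞}^{∞} e^{iαu} g(u) dσ(u) = 0 for all α ≥ 0. Then ∫_{-∞}^{∞} u^n g(u) dσ(u) = 0 for every n ∈ ℤ (both nonnegative and negative integers n). -/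
/-!
Put `F n α = ∫ e^{iαu} uⁿ g(u) dσ(u)`. All `F n` are continuous and bounded by `∫ |u|ⁿ |g| dσ`, and
differentiation under the integral sign gives `(F n)' = i F (n + 1)`. If `F n` vanishes on
`[0, ∞)`, so does its derivative `i F (n + 1)` (on `(0, ∞)`, then at `0` by continuity). If
`F (n + 1)` vanishes on `[0, ∞)`, then `F n` is a constant `c` there, so `F (n - 1)` grows like
`i c α` while staying bounded, which forces `c = 0`. Starting from `F 0 = 0` this reaches every
`n ∈ ℤ`. Since `0⁻¹ = 0`, the step `u * uⁿ = uⁿ⁺¹` fails at `u = 0` for `n = -1`; it holds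
`σ`-a.e. because `σ {0} = 0`.
-/

open MeasureTheory Complex Set Filter

noncomputable def expTransform (μ : Measure ℝ) (f : ℝ → ℂ) (α : ℝ) : ℂ :=
  ∫ u, exp (I * α * u) * f u ∂μ

lemma norm_exp_I_mul_ofReal_mul_ofReal (α u : ℝ) : ‖exp (I * α * u)‖ = 1 := by
  rw [show I * α * u = ((α * u : ℝ) : ℂ) * I by push_cast; ring, norm_exp_ofReal_mul_I]

lemma hasDerivAt_exp_I_mul_ofReal_mul (u α : ℝ) :
    HasDerivAt (fun x : ℝ => exp (I * x * u)) (I * u * exp (I * α * u)) α := by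
  have h := (((hasDerivAt_id (α : ℂ)).const_mul (I * u)).cexp).comp_ofReal
  simp only [id_eq, mul_one] at h
  convert h using 1
  · funext x; ring_nf
  · ring_nf

lemma eq_add_smul_of_hasDerivAt_Ici {E : Type*} [NormedAddCommGroup E] [NormedSpace ℝ E]
    {φ : ℝ → E} {c : E} (hφ : ∀ x, 0 ≤ x → HasDerivAt φ c x) {x : ℝ} (hx : 0 ≤ x) :
    φ x = φ 0 + x • c := by
  have hψ : ∀ y, 0 ≤ y → HasDerivAt (fun y => φ y - y • c) 0 y := fun y hy => by
    simpa using (hφ y hy).fun_sub ((hasDerivAt_id y).smul_const c)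
  have := constant_of_has_deriv_right_zero (a := 0) (b := x)
    (fun y hy => (hψ y hy.1).continuousAt.continuousWithinAt)
    (fun y hy => (hψ y hy.1).hasDerivWithinAt) x ⟨hx, le_rfl⟩
  simp only [zero_smul, sub_zero] at this
  rw [← this]; abel

lemma eq_zero_of_hasDerivAt_Ici_of_norm_le {E : Type*} [NormedAddCommGroup E] [NormedSpace ℝ E]
    {φ : ℝ → E} {c : E} {M : ℝ} (hφ : ∀ x, 0 ≤ x → HasDerivAt φ c x) (hM : ∀ x, ‖φ x‖ ≤ M) :
    c = 0 := by
  by_contra hc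
  have hc' : 0 < ‖c‖ := norm_pos_iff.mpr hc
  have hM0 : 0 ≤ M := (norm_nonneg _).trans (hM 0)
  set T := (2 * M + 1) / ‖c‖
  have hT : 0 ≤ T := by positivity
  have : T * ‖c‖ ≤ 2 * M := calc
    T * ‖c‖ = ‖φ T - φ 0‖ := by
      rw [eq_add_smul_of_hasDerivAt_Ici hφ hT, add_sub_cancel_left, norm_smul,
        Real.norm_of_nonneg hT]
    _ ≤ ‖φ T‖ + ‖φ 0‖ := norm_sub_le _ _
    _ ≤ 2 * M := by linarith [hM T, hM 0]
  rw [div_mul_cancel₀ _ hc'.ne'] at this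
  linarith

namespace expTransform

variable {μ : Measure ℝ} {f g : ℝ → ℂ}

lemma norm_le (α : ℝ) : ‖expTransform μ f α‖ ≤ ∫ u, ‖f u‖ ∂μ :=
  (norm_integral_le_integral_norm _).trans_eq <| by
    simp only [norm_mul, norm_exp_I_mul_ofReal_mul_ofReal, one_mul]

lemma aestronglyMeasurable_integrand (hf : AEStronglyMeasurable f μ) (α : ℝ) :
    AEStronglyMeasurable (fun u : ℝ => exp (I * α * u) * f u) μ :=
  (Continuous.aestronglyMeasurable (by fun_prop)).mul hf

lemma norm_integrand (α u : ℝ) : ‖exp (I * α * u) * f u‖ = ‖f u‖ := by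
  rw [norm_mul, norm_exp_I_mul_ofReal_mul_ofReal, one_mul]

lemma integrable_integrand (hf : Integrable f μ) (α : ℝ) :
    Integrable (fun u : ℝ => exp (I * α * u) * f u) μ :=
  hf.norm.mono' (aestronglyMeasurable_integrand hf.1 α)
    (ae_of_all _ fun u => (norm_integrand α u).le)

lemma continuous (hf : Integrable f μ) : Continuous (expTransform μ f) :=
  continuous_of_dominated (fun α => aestronglyMeasurable_integrand hf.1 α)
    (fun α => ae_of_all _ fun u => (norm_integrand α u).le) hf.norm
    (ae_of_all _ fun _ => by fun_prop)

lemma hasDerivAt (hf : Integrable f μ) (hg : Integrable g μ) (hgf : g =ᵐ[μ] fun u => u * f u)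
    (α : ℝ) : HasDerivAt (expTransform μ f) (I * expTransform μ g α) α := by
  have key := hasDerivAt_integral_of_dominated_loc_of_deriv_le (μ := μ) (x₀ := α)
    (F' := fun x u => I * u * exp (I * x * u) * f u) (bound := fun u => ‖g u‖)
    univ_mem (.of_forall (aestronglyMeasurable_integrand hf.1)) (integrable_integrand hf α)
    ((Continuous.aestronglyMeasurable (by fun_prop)).mul hf.1) ?_ hg.norm
    (ae_of_all _ fun u x _ => (hasDerivAt_exp_I_mul_ofReal_mul u x).mul_const (f u))
  · have hderiv : ∫ u, I * u * exp (I * α * u) * f u ∂μ = I * expTransform μ g α := by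
      rw [expTransform, ← integral_const_mul]
      refine integral_congr_ae (hgf.mono fun u hu => ?_)
      simp only [hu]; ring
    exact hderiv ▸ key.2
  · filter_upwards [hgf] with u hu x _
    simp only [hu, norm_mul, norm_exp_I_mul_ofReal_mul_ofReal, norm_I, one_mul, mul_one, le_refl]

lemma eqOn_zero_of_ae_eq_mul (hf : Integrable f μ) (hg : Integrable g μ)
    (hgf : g =ᵐ[μ] fun u => u * f u) (h : EqOn (expTransform μ f) 0 (Ici 0)) :
    EqOn (expTransform μ g) 0 (Ici 0) := by
  have hpos : EqOn (expTransform μ g) 0 (Ioi 0) := fun α hα => by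
    have hderiv : HasDerivAt (expTransform μ f) 0 α :=
      (hasDerivAt_const α 0).congr_of_eventuallyEq (mem_of_superset (Ici_mem_nhds hα) h)
    simpa [I_ne_zero] using (hasDerivAt hf hg hgf α).unique hderiv
  rw [← closure_Ioi]
  exact hpos.of_subset_closure (continuous hg).continuousOn continuousOn_const subset_closure
    subset_rfl

lemma eqOn_zero_of_ae_eq_mul_mul {f₀ f₁ f₂ : ℝ → ℂ} (h₀ : Integrable f₀ μ)
    (h₁ : Integrable f₁ μ) (h₂ : Integrable f₂ μ) (h₁₀ : f₁ =ᵐ[μ] fun u => u * f₀ u)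
    (h₂₁ : f₂ =ᵐ[μ] fun u => u * f₁ u) (h : EqOn (expTransform μ f₂) 0 (Ici 0)) :
    EqOn (expTransform μ f₁) 0 (Ici 0) := by
  have hconst : ∀ α, 0 ≤ α → expTransform μ f₁ α = expTransform μ f₁ 0 := fun α hα => by
    simpa using eq_add_smul_of_hasDerivAt_Ici (c := (0 : ℂ))
      (fun x hx => by simpa [h hx] using hasDerivAt h₁ h₂ h₂₁ x) hα
  have hc : I * expTransform μ f₁ 0 = 0 :=
    eq_zero_of_hasDerivAt_Ici_of_norm_le (fun x hx => hconst x hx ▸ hasDerivAt h₀ h₁ h₁₀ x)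
      (norm_le (f := f₀))
  intro α hα
  simpa [hconst α hα, I_ne_zero] using hc

lemma eqOn_zero_of_forall_ae_eq_mul {f : ℤ → ℝ → ℂ} (hf : ∀ n, Integrable (f n) μ)
    (hsucc : ∀ n, f (n + 1) =ᵐ[μ] fun u => u * f n u) (h : EqOn (expTransform μ (f 0)) 0 (Ici 0))
    (n : ℤ) : EqOn (expTransform μ (f n)) 0 (Ici 0) := by
  induction n using Int.induction_on with
  | zero => exact h
  | succ n ih => exact eqOn_zero_of_ae_eq_mul (hf n) (hf _) (hsucc n) ih
  | pred n ih =>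
    refine eqOn_zero_of_ae_eq_mul_mul (hf (-n - 1 - 1)) (hf _) (hf (-n))
      (by simpa using hsucc (-n - 1 - 1)) (by simpa using hsucc (-n - 1)) ih

end expTransform

theorem annihilates_all_powers_of_annihilates_exponentials_general
    (σ : Measure ℝ)
    (h0 : σ {0} = 0)
    (hmom : ∀ n : ℤ, Integrable (fun u : ℝ => |u| ^ n) σ)
    (g : ℝ → ℂ) (hg : MemLp g ⊤ σ)
    (hexp : ∀ α : ℝ, 0 ≤ α → ∫ u, Complex.exp (Complex.I * (α : ℂ) * (u : ℂ)) * g u ∂σ = 0) :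
    ∀ n : ℤ, ∫ u, (u : ℂ) ^ n * g u ∂σ = 0 := by
  have hne : ∀ᵐ u ∂σ, u ≠ 0 := compl_mem_ae_iff.mpr h0
  have hint : ∀ n : ℤ, Integrable (fun u : ℝ => (u : ℂ) ^ n * g u) σ := fun n => by
    have hmeas : Measurable fun u : ℝ => (u : ℂ) ^ n := by fun_prop
    have hpow : Integrable (fun u : ℝ => (u : ℂ) ^ n) σ :=
      (integrable_norm_iff hmeas.aestronglyMeasurable).mp (by simpa using hmom n)
    exact hpow.mul_of_top_left hg
  have hsucc : ∀ n : ℤ, (fun u : ℝ => (u : ℂ) ^ (n + 1) * g u) =ᵐ[σ]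
      fun u => u * ((u : ℂ) ^ n * g u) := fun n => hne.mono fun u hu => by
    dsimp only
    rw [zpow_add_one₀ (ofReal_ne_zero.mpr hu)]; ring
  intro n
  simpa [expTransform] using expTransform.eqOn_zero_of_forall_ae_eq_mul hint hsucc
    (fun α hα => by simpa [expTransform] using hexp α hα) n self_mem_Ici

/-- (key step of the proof of Theorem 4.1) If `g ∈ L^∞(σ)` annihilates
all exponentials `e^{iαu}`, `α ≥ 0`, with respect to a finite Borel measure `σ` on `ℝ`
with no mass at the origin and finite moments of all integer orders, then
`∫ uⁿ g(u) dσ(u) = 0` for all `n ∈ ℤ`. -/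
theorem annihilates_all_powers_of_annihilates_exponentials
    (σ : Measure ℝ) [IsFiniteMeasure σ]
    (h0 : σ {0} = 0)
    (hmom : ∀ n : ℤ, Integrable (fun u : ℝ => |u| ^ n) σ)
    (g : ℝ → ℂ) (hg : MemLp g ⊤ σ)
    (hexp : ∀ α : ℝ, 0 ≤ α → ∫ u, Complex.exp (Complex.I * (α : ℂ) * (u : ℂ)) * g u ∂σ = 0) :
    ∀ n : ℤ, ∫ u, (u : ℂ) ^ n * g u ∂σ = 0 :=
  annihilates_all_powers_of_annihilates_exponentials_general σ h0 hmom g hg hexp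
end
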